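/- Let r, s ∈ (0, 1) be real numbers, and consider the vectors u = (s − r, 1) and v = (1, 0) in the Euclidean plane ℝ². Then the absolute value of the cosine of the angle between u and v equals |s − r|/√(1 + (s − r)²) and is strictly less than 1/√2; consequently the angle between u and v lies strictly between π/4 and 3π/4 (i.e. strictly between 45° and 135°). -/

import Mathlib

open RealInnerProductSpace

/-! Since `√2 / 2 = cos (π / 4)` and `arccos (-x) = π - arccos x`, the angle `arccos x` lies strictly
between `π / 4` and `3π / 4` exactly when `|x| < 1 / √2`. For `u = (t, 1)` and `v = (1, 0)` the
cosine is `t / √(1 + t²)`, whose square is below `1 / 2` precisely when `t² < 1`, which holds for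
`t = s - r` with `r, s ∈ (0, 1)`. -/

/-- The vector `(a, b)` in the Euclidean plane `ℝ²`. -/
noncomputable def vec2 (a b : ℝ) : EuclideanSpace ℝ (Fin 2) :=
  (WithLp.equiv 2 (Fin 2 → ℝ)).symm ![a, b]

theorem inner_vec2 (a b c d : ℝ) : ⟪vec2 a b, vec2 c d⟫ = a * c + b * d := by
  simp [vec2, PiLp.inner_apply, Fin.sum_univ_two, mul_comm]

theorem norm_vec2 (a b : ℝ) : ‖vec2 a b‖ = √(a ^ 2 + b ^ 2) := by
  simp [vec2, EuclideanSpace.norm_eq, Fin.sum_univ_two]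

namespace Real

theorem pi_div_four_lt_arccos {x : ℝ} : π / 4 < arccos x ↔ x < √2 / 2 := by
  simpa only [not_le] using arccos_le_pi_div_four.not

theorem arccos_lt_three_pi_div_four {x : ℝ} : arccos x < 3 * π / 4 ↔ -(√2 / 2) < x := by
  rw [← neg_lt, ← pi_div_four_lt_arccos, arccos_neg]
  constructor <;> intro h <;> linarith

theorem arccos_mem_Ioo_of_abs_lt_inv_sqrt_two {x : ℝ} (hx : |x| < 1 / √2) :
    π / 4 < arccos x ∧ arccos x < 3 * π / 4 := by
  rw [← sqrt_div_self', abs_lt] at hx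
  exact ⟨pi_div_four_lt_arccos.2 hx.2, arccos_lt_three_pi_div_four.2 hx.1⟩

theorem abs_div_sqrt_one_add_sq_lt_inv_sqrt_two {t : ℝ} (ht : |t| < 1) :
    |t| / √(1 + t ^ 2) < 1 / √2 := by
  have ht2 : t ^ 2 < 1 := sq_lt_one_iff_abs_lt_one t |>.2 ht
  rw [div_lt_div_iff₀ (by positivity) (by positivity), one_mul,
    lt_sqrt (by positivity), mul_pow, sq_abs, sq_sqrt zero_le_two]
  linarith

end Real

/-- For `r, s ∈ (0, 1)`, the absolute value of the cosine of the angle between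
`u = (s − r, 1)` and `v = (1, 0)` equals `|s − r|/√(1 + (s − r)²)` and is strictly
less than `1/√2`; consequently the angle between `u` and `v` lies strictly between
`π/4` and `3π/4`. -/
theorem stmt9 (r s : ℝ) (hr : r ∈ Set.Ioo (0 : ℝ) 1) (hs : s ∈ Set.Ioo (0 : ℝ) 1)
    (u v : EuclideanSpace ℝ (Fin 2))
    (hu : u = vec2 (s - r) 1) (hv : v = vec2 1 0) :
    |⟪u, v⟫ / (‖u‖ * ‖v‖)| = |s - r| / Real.sqrt (1 + (s - r) ^ 2) ∧
    |s - r| / Real.sqrt (1 + (s - r) ^ 2) < 1 / Real.sqrt 2 ∧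
    Real.pi / 4 < InnerProductGeometry.angle u v ∧
    InnerProductGeometry.angle u v < 3 * Real.pi / 4 := by
  have hcos : ⟪u, v⟫ / (‖u‖ * ‖v‖) = (s - r) / √(1 + (s - r) ^ 2) := by
    rw [hu, hv, inner_vec2, norm_vec2, norm_vec2]
    norm_num [add_comm]
  have habs_cos : |⟪u, v⟫ / (‖u‖ * ‖v‖)| = |s - r| / √(1 + (s - r) ^ 2) := by
    rw [hcos, abs_div, abs_of_nonneg (Real.sqrt_nonneg _)]
  have hlt : |s - r| / √(1 + (s - r) ^ 2) < 1 / √2 :=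
    Real.abs_div_sqrt_one_add_sq_lt_inv_sqrt_two
      (abs_sub_lt_of_nonneg_of_lt hs.1.le hs.2 hr.1.le hr.2)
  exact ⟨habs_cos, hlt, Real.arccos_mem_Ioo_of_abs_lt_inv_sqrt_two (habs_cos ▸ hlt)⟩
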